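/- Suppose each f_ij belongs to 𝒰. Then for every initial condition p(0) ∈ P_G, the solution t ↦ p(t) of the formation control system ṗ = F(p) exists for all t ≥ 0, remains in P_G for all t ≥ 0, and converges to the set of equilibria: dist(p(t), {q ∈ P_G : F(q) = 0}) → 0 as t → ∞. -/

import Mathlib

open scoped BigOperators
open scoped Classical

noncomputable section

abbrev Plane : Type := EuclideanSpace ℝ (Fin 2)

abbrev Config (ι : Type) : Type := PiLp 2 (fun _ : ι => Plane)

def ConfigSpace {N : ℕ} (G : SimpleGraph (Fin N)) : Set (Config (Fin N)) :=
  {p | ∀ i j : Fin N, G.Adj i j → p i ≠ p j}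

noncomputable def formationField {ι : Type} [Fintype ι] (Adj : ι → ι → Prop)
    (f : ι → ι → ℝ → ℝ) (q : Config ι) : Config ι :=
  WithLp.toLp 2 (fun v => ∑ u, if Adj v u then f v u ‖q v - q u‖ • (q u - q v) else 0)

noncomputable def potential {N : ℕ} (G : SimpleGraph (Fin N)) (f : Fin N → Fin N → ℝ → ℝ)
    (p : Config (Fin N)) : ℝ :=
  ∑ i, ∑ j, if G.Adj i j ∧ i < j then ∫ t in (1:ℝ)..(‖p i - p j‖), t * f i j t else 0

def MemU (f : ℝ → ℝ) : Prop :=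
  ContDiffOn ℝ 1 f (Set.Ioi 0) ∧
  (∀ x : ℝ, 0 < x → 0 < deriv (fun t => t * f t) x) ∧
  (∃! d : ℝ, 0 < d ∧ f d = 0) ∧
  Filter.Tendsto (fun x : ℝ => ∫ t in x..(1:ℝ), t * f t) (nhdsWithin 0 (Set.Ioi 0)) Filter.atBot

def SO2 (θ : Matrix (Fin 2) (Fin 2) ℝ) : Prop :=
  θ ∈ Matrix.orthogonalGroup (Fin 2) ℝ ∧ θ.det = 1

noncomputable def rotAct {ι : Type} (θ : Matrix (Fin 2) (Fin 2) ℝ) (v : Plane) (p : Config ι) :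
    Config ι :=
  WithLp.toLp 2 (fun i => Matrix.toEuclideanLin θ (p i) + v)

def orbitSE2 {ι : Type} (p : Config ι) : Set (Config ι) :=
  {q | ∃ θ : Matrix (Fin 2) (Fin 2) ℝ, SO2 θ ∧ ∃ v : Plane, q = rotAct θ v p}

noncomputable def basisVec {ι : Type} [DecidableEq ι] (i : ι) (a : Fin 2) : Config ι :=
  WithLp.toLp 2 (Pi.single i (EuclideanSpace.single a (1:ℝ)))

noncomputable def hessMat {ι : Type} [Fintype ι] [DecidableEq ι] (Φ : Config ι → ℝ)
    (p : Config ι) : Matrix (ι × Fin 2) (ι × Fin 2) ℝ :=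
  Matrix.of fun q r => fderiv ℝ (fun x => fderiv ℝ Φ x (basisVec q.1 q.2)) p (basisVec r.1 r.2)

noncomputable def jacMat {ι : Type} [Fintype ι] [DecidableEq ι] (F : Config ι → Config ι)
    (p : Config ι) : Matrix (ι × Fin 2) (ι × Fin 2) ℝ :=
  Matrix.of fun q r => fderiv ℝ (fun x => F x q.1 q.2) p (basisVec r.1 r.2)

noncomputable def posIndex {n : Type} [Fintype n] [DecidableEq n] (A : Matrix n n ℝ) : ℕ :=
  Multiset.card (A.charpoly.roots.filter fun x => 0 < x)

noncomputable def negIndex {n : Type} [Fintype n] [DecidableEq n] (A : Matrix n n ℝ) : ℕ :=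
  Multiset.card (A.charpoly.roots.filter fun x => x < 0)

noncomputable def nullIndex {n : Type} [Fintype n] [DecidableEq n] (A : Matrix n n ℝ) : ℕ :=
  Multiset.card (A.charpoly.roots.filter fun x => x = 0)

inductive IsTriangulatedLaman : {N : ℕ} → SimpleGraph (Fin N) → Prop
  | base : IsTriangulatedLaman (⊤ : SimpleGraph (Fin 2))
  | grow {N : ℕ} (G' : SimpleGraph (Fin (N + 2))) (G : SimpleGraph (Fin (N + 3)))
      (j k : Fin (N + 2)) :
      IsTriangulatedLaman G' → G'.Adj j k →
      (∀ a b : Fin (N + 2), G.Adj a.castSucc b.castSucc ↔ G'.Adj a b) →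
      (∀ a : Fin (N + 2), G.Adj a.castSucc (Fin.last (N + 2)) ↔ a = j ∨ a = k) →
      IsTriangulatedLaman G

def StronglyRigid {N : ℕ} (G : SimpleGraph (Fin N)) (p : Config (Fin N)) : Prop :=
  ∀ i j k : Fin N, G.Adj i j → G.Adj i k → G.Adj j k →
    ¬ Collinear ℝ ({p i, p j, p k} : Set Plane)

def TriangleInequalities {N : ℕ} (G : SimpleGraph (Fin N)) (d : Fin N → Fin N → ℝ) : Prop :=
  ∀ i j k : Fin N, G.Adj i j → G.Adj i k → G.Adj j k → d j k < d i j + d i k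

def vertexSet {N : ℕ} (B : Finset (Sym2 (Fin N))) : Finset (Fin N) :=
  Finset.univ.filter fun v => ∃ e ∈ B, v ∈ e

def inducedSubgraph {N : ℕ} (B : Finset (Sym2 (Fin N))) : SimpleGraph ↥(vertexSet B) :=
  SimpleGraph.fromEdgeSet {e | Sym2.map Subtype.val e ∈ B}

def InducedTLaman {N : ℕ} (B : Finset (Sym2 (Fin N))) : Prop :=
  ∃ (M : ℕ) (H : SimpleGraph (Fin M)), IsTriangulatedLaman H ∧ Nonempty (inducedSubgraph B ≃g H)

def IsLineLamanPart {N : ℕ} (p : Config (Fin N)) (B : Finset (Sym2 (Fin N))) : Prop :=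
  InducedTLaman B ∧ Collinear ℝ (p '' (vertexSet B : Set (Fin N)))

def IsLineLamanPartition {N : ℕ} (G : SimpleGraph (Fin N)) (p : Config (Fin N))
    (P : Finset (Finset (Sym2 (Fin N)))) : Prop :=
  (∀ B ∈ P, B.Nonempty ∧ (B : Set (Sym2 (Fin N))) ⊆ G.edgeSet ∧ IsLineLamanPart p B) ∧
  ∀ e ∈ G.edgeSet, ∃! B, B ∈ P ∧ e ∈ B

def Refines {N : ℕ} (Q P : Finset (Finset (Sym2 (Fin N)))) : Prop :=
  ∀ B ∈ Q, ∃ C ∈ P, B ⊆ C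

def IsIndependentPartition {N : ℕ} (G : SimpleGraph (Fin N)) (p : Config (Fin N))
    (P : Finset (Finset (Sym2 (Fin N)))) : Prop :=
  IsLineLamanPartition G p P ∧ ∀ Q, IsLineLamanPartition G p Q → Refines Q P

def subConfig {N : ℕ} (p : Config (Fin N)) (B : Finset (Sym2 (Fin N))) :
    Config ↥(vertexSet B) :=
  WithLp.toLp 2 (fun v => p v.1)

noncomputable def subField {N : ℕ} (f : Fin N → Fin N → ℝ → ℝ) (B : Finset (Sym2 (Fin N))) :
    Config ↥(vertexSet B) → Config ↥(vertexSet B) :=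
  formationField (fun u v => s(u.1, v.1) ∈ B) (fun u v => f u.1 v.1)

def IsEquivariantMorse {N : ℕ} (G : SimpleGraph (Fin N)) (f : Fin N → Fin N → ℝ → ℝ) : Prop :=
  (∃ S : Finset (Config (Fin N)),
      {p | p ∈ ConfigSpace G ∧ formationField G.Adj f p = 0} = ⋃ q ∈ S, orbitSE2 q) ∧
  ∀ p, p ∈ ConfigSpace G → formationField G.Adj f p = 0 →
    nullIndex (jacMat (formationField G.Adj f) p) = 3

noncomputable def distMap {N : ℕ} (G : SimpleGraph (Fin N)) (p : Config (Fin N)) :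
    ↥G.edgeFinset → ℝ :=
  fun e => Sym2.lift ⟨fun i j => ‖p i - p j‖ ^ 2, fun i j => by dsimp only; rw [norm_sub_rev]⟩ e.1

open Filter MeasureTheory

/-!
The field is the negative gradient of the potential
`Φ(p) = ∑_{i < j adjacent} ∫_1^{‖x_i - x_j‖} t f_ij(t) dt`, so `Φ` decreases along solutions at
rate `‖F‖²`. Each edge potential tends to `+∞` both as the edge collapses (C2) and as it grows
(the slope `t f(t)` is increasing with a positive zero, C1). Hence the sublevel set of `Φ` through
`p(0)` keeps every edge length in a compact subinterval of `(0, ∞)`; together with the sum of the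
positions over each connected component, which the flow conserves, this confines the solution to
a compact subset of `P_G`. There the field is uniformly Lipschitz, so local solutions of a common
duration concatenate into a global one, and Barbalat's argument (`Φ` bounded below, `F ∘ p`
uniformly continuous) gives `F(p(t)) → 0`; by compactness `p(t)` approaches the equilibria.
-/

open Set Metric
open scoped Topology NNReal

section

-- Instance search for this through the `PiLp` and `EuclideanSpace` layers times out.
local instance {ι : Type} [Fintype ι] : ContinuousSMul ℝ (Config ι) :=
  IsBoundedSMul.continuousSMul

lemma SimpleGraph.Walk.norm_sub_le_length_mul {V E : Type*} [SeminormedAddCommGroup E]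
    {G : SimpleGraph V} {x : V → E} {M : ℝ} (hM : ∀ a b, G.Adj a b → ‖x a - x b‖ ≤ M)
    {i j : V} (w : G.Walk i j) : ‖x i - x j‖ ≤ w.length * M := by
  induction w with
  | nil => simp
  | @cons a b c hab w ih =>
    calc ‖x a - x c‖ ≤ ‖x a - x b‖ + ‖x b - x c‖ := norm_sub_le_norm_sub_add_norm_sub _ _ _
      _ ≤ M + w.length * M := add_le_add (hM a b hab) ih
      _ = (w.cons hab).length * M := by
        simp only [SimpleGraph.Walk.length_cons, Nat.cast_add, Nat.cast_one]; ring

lemma SimpleGraph.Reachable.norm_sub_le_card_mul {V E : Type*} [Fintype V]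
    [SeminormedAddCommGroup E] {G : SimpleGraph V} {x : V → E} {M : ℝ} (hM₀ : 0 ≤ M)
    (hM : ∀ a b, G.Adj a b → ‖x a - x b‖ ≤ M) {i j : V} (h : G.Reachable i j) :
    ‖x i - x j‖ ≤ Fintype.card V * M := by
  obtain ⟨w⟩ := h
  calc ‖x i - x j‖ ≤ w.bypass.length * M := w.bypass.norm_sub_le_length_mul hM
    _ ≤ Fintype.card V * M := by
      gcongr
      exact_mod_cast w.bypass_isPath.length_lt.le

lemma norm_le_add_norm_sum_of_norm_sub_le {ι E : Type*} [NormedAddCommGroup E] [NormedSpace ℝ E]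
    {S : Finset ι} {y : ι → E} {i : ι} (hi : i ∈ S) {D : ℝ} (hD : ∀ j ∈ S, ‖y i - y j‖ ≤ D) :
    ‖y i‖ ≤ D + ‖∑ j ∈ S, y j‖ := by
  have hS : (1 : ℝ) ≤ S.card := by exact_mod_cast Finset.card_pos.2 ⟨i, hi⟩
  have hdecomp : (S.card : ℝ) • y i = ∑ j ∈ S, (y i - y j) + ∑ j ∈ S, y j := by
    rw [Finset.sum_sub_distrib, Finset.sum_const, sub_add_cancel, Nat.cast_smul_eq_nsmul]
  have : S.card * ‖y i‖ ≤ S.card * D + ‖∑ j ∈ S, y j‖ := by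
    calc S.card * ‖y i‖ = ‖(S.card : ℝ) • y i‖ := by rw [norm_smul, Real.norm_natCast]
      _ ≤ ∑ j ∈ S, ‖y i - y j‖ + ‖∑ j ∈ S, y j‖ := by
        rw [hdecomp]; exact (norm_add_le _ _).trans (add_le_add_left (norm_sum_le _ _) _)
      _ ≤ S.card * D + ‖∑ j ∈ S, y j‖ := by
        gcongr
        simpa using Finset.sum_le_sum hD
  nlinarith [norm_nonneg (∑ j ∈ S, y j)]

lemma SimpleGraph.sum_sum_ite_adj_lt_add_swap {V M : Type*} [Fintype V] [LinearOrder V]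
    [AddCommMonoid M] (G : SimpleGraph V) (a : V → V → M) :
    ∑ i, ∑ j, (if G.Adj i j ∧ i < j then a i j + a j i else 0) =
      ∑ i, ∑ j, if G.Adj i j then a i j else 0 := by
  have hswap : ∑ i, ∑ j, (if G.Adj i j ∧ i < j then a j i else 0) =
      ∑ i, ∑ j, if G.Adj i j ∧ j < i then a i j else 0 := by
    rw [Finset.sum_comm]
    simp only [G.adj_comm]
  have hsplit : ∀ i j, (if G.Adj i j then a i j else 0) =
      (if G.Adj i j ∧ i < j then a i j else 0) + if G.Adj i j ∧ j < i then a i j else 0 := by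
    intro i j
    by_cases h : G.Adj i j
    · rcases lt_or_gt_of_ne (G.ne_of_adj h) with hij | hji
      · simp [h, hij, hij.not_gt]
      · simp [h, hji, hji.not_gt]
    · simp [h]
  simp only [hsplit, Finset.sum_add_distrib, ← hswap, ite_add_zero]

section ODE

variable {E : Type*} [NormedAddCommGroup E] [NormedSpace ℝ E]

lemma mem_closedBall_of_forall_hasDerivWithinAt_Icc {v : E → E} {g : ℝ → E} {a b L r : ℝ}
    (hr : 0 ≤ r) (hg : ∀ t ∈ Icc a b, HasDerivWithinAt g (v (g t)) (Icc a b) t)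
    (hv : ∀ x ∈ closedBall (g a) r, ‖v x‖ < L) (hLr : L * (b - a) ≤ r) :
    ∀ t ∈ Icc a b, g t ∈ closedBall (g a) r := by
  have hL : 0 ≤ L := (norm_nonneg _).trans (hv _ (mem_closedBall_self hr)).le
  -- as long as `g` stays in the ball it moves at speed less than `L`
  have hbound : ∀ t ∈ Icc a b, ‖g t - g a‖ ≤ L * (t - a) :=
    image_norm_le_of_norm_deriv_right_lt_deriv_boundary (f := fun t => g t - g a)
      (fun t ht => ((hg t ht).sub_const (g a)).continuousWithinAt)
      (fun t ht => ((hg t (Ico_subset_Icc_self ht)).sub_const (g a)).mono_of_mem_nhdsWithin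
        (Icc_mem_nhdsGE_of_mem ht))
      (by simp) (fun t => ((hasDerivAt_id t).sub_const a).const_mul L |>.congr_deriv (by simp))
      (fun t ht heq => hv _ (by
        rw [mem_closedBall, dist_eq_norm, heq]
        exact (mul_le_mul_of_nonneg_left (by linarith [ht.2]) hL).trans hLr))
  intro t ht
  rw [mem_closedBall, dist_eq_norm]
  exact (hbound t ht).trans ((mul_le_mul_of_nonneg_left (by linarith [ht.2]) hL).trans hLr)

theorem exists_forall_exists_hasDerivWithinAt_Icc [ProperSpace E] {v : E → E} {U K : Set E}
    (hU : IsOpen U) (hv : ContDiffOn ℝ 1 v U) (hK : IsCompact K) (hKU : K ⊆ U) :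
    ∃ K' ⊆ U, IsCompact K' ∧ ∃ ε > 0, ∀ q ∈ K, ∀ a : ℝ, ∃ g : ℝ → E, g a = q ∧
      ∀ t ∈ Icc a (a + ε), g t ∈ K' ∧ HasDerivWithinAt g (v (g t)) (Icc a (a + ε)) t := by
  obtain ⟨ρ, hρ, hthick⟩ := hK.exists_thickening_subset_open hU hKU
  have hKU : cthickening (ρ / 2) K ⊆ U :=
    (cthickening_subset_thickening' hρ (half_lt_self hρ) K).trans hthick
  have hball : ∀ q ∈ K, closedBall q (ρ / 2) ⊆ cthickening (ρ / 2) K :=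
    fun q hq => closedBall_subset_cthickening hq _
  obtain ⟨C, hC⟩ := hK.cthickening.exists_bound_of_continuousOn (hv.continuousOn.mono hKU)
  obtain ⟨L, hL⟩ := hK.cthickening.exists_bound_of_continuousOn
    ((hv.continuousOn_fderiv_of_isOpen hU le_rfl).mono hKU)
  obtain ⟨C', hC', hvC'⟩ : ∃ C' : ℝ≥0, (0 : ℝ) < C' ∧ ∀ x ∈ cthickening (ρ / 2) K, ‖v x‖ < C' :=
    ⟨(max C 0 + 1).toNNReal, by rw [Real.coe_toNNReal _ (by positivity)]; positivity,
      fun x hx => by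
        rw [Real.coe_toNNReal _ (by positivity)]
        exact (hC x hx).trans_lt ((le_max_left C 0).trans_lt (lt_add_one _))⟩
  refine ⟨_, hKU, hK.cthickening, ρ / 2 / C', div_pos (half_pos hρ) hC', fun q hq a => ?_⟩
  have hlip : LipschitzOnWith L.toNNReal v (closedBall q (ρ / 2)) :=
    Convex.lipschitzOnWith_of_nnnorm_fderiv_le
      (fun x hx => (hv.contDiffAt (hU.mem_nhds (hKU (hball q hq hx)))).differentiableAt
        one_ne_zero)
      (fun x hx => by
        rw [← NNReal.coe_le_coe, coe_nnnorm]
        exact (hL x (hball q hq hx)).trans (Real.le_coe_toNNReal L))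
      (convex_closedBall q _)
  have hε : (C' : ℝ) * (a + ρ / 2 / C' - a) = ρ / 2 := by field_simp; ring
  have hρ₂ : ((ρ / 2).toNNReal : ℝ) = ρ / 2 := Real.coe_toNNReal _ (by positivity)
  have hpl : IsPicardLindelof (fun _ => v) (⟨a, left_mem_Icc.2
      (le_add_of_nonneg_right (div_pos (half_pos hρ) hC').le)⟩ : Icc a (a + ρ / 2 / C')) q
      (ρ / 2).toNNReal 0 C' L.toNNReal :=
    { lipschitzOnWith := fun _ _ => by rw [hρ₂]; exact hlip
      continuousOn := fun _ _ => continuousOn_const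
      norm_le := fun _ _ x hx => (hvC' x (hball q hq (by rwa [hρ₂] at hx))).le
      mul_max_le := by
        rw [max_eq_left (by simp only [add_sub_cancel_left, sub_self]; positivity), hρ₂, NNReal.coe_zero, sub_zero]
        exact hε.le }
  obtain ⟨g, hg₀, hg⟩ := hpl.exists_eq_forall_mem_Icc_hasDerivWithinAt₀
  have hgball := mem_closedBall_of_forall_hasDerivWithinAt_Icc (by positivity) hg
    (by rw [hg₀]; exact fun x hx => hvC' x (hball q hq hx)) hε.le
  rw [hg₀] at hgball
  exact ⟨g, hg₀, fun t ht => ⟨hball q hq (hgball t ht), hg t ht⟩⟩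

lemma exists_nat_mem_Ico_mul {ε t : ℝ} (hε : 0 < ε) (ht : 0 ≤ t) :
    ∃ n : ℕ, t ∈ Ico (n * ε) (n * ε + ε) := by
  refine ⟨⌊t / ε⌋₊, ?_, ?_⟩
  · exact (le_div_iff₀ hε).1 (Nat.floor_le (div_nonneg ht hε.le))
  · rw [← add_one_mul, ← div_lt_iff₀ hε]
    exact Nat.lt_floor_add_one _

lemma exists_nat_mem_Ioc_mul {ε t : ℝ} (hε : 0 < ε) (ht : 0 < t) :
    ∃ n : ℕ, t ∈ Ioc (n * ε) (n * ε + ε) := by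
  obtain ⟨n, hn⟩ := Nat.exists_eq_add_one.2 (Nat.ceil_pos.2 (div_pos ht hε))
  refine ⟨n, ?_, ?_⟩
  · have := Nat.ceil_lt_add_one (div_pos ht hε).le
    rw [hn, Nat.cast_add_one, add_lt_add_iff_right, lt_div_iff₀ hε] at this
    exact this
  · rw [← add_one_mul, ← div_le_iff₀ hε, ← Nat.cast_add_one, ← hn]
    exact Nat.le_ceil _

lemma hasDerivAt_of_forall_hasDerivWithinAt_Icc_nat {γ γ' : ℝ → E} {ε : ℝ} (hε : 0 < ε)
    (h : ∀ n : ℕ, ∀ t ∈ Icc (n * ε) (n * ε + ε),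
      HasDerivWithinAt γ (γ' t) (Icc (n * ε) (n * ε + ε)) t)
    (h₀ : HasDerivWithinAt γ (γ' 0) (Iic 0) 0) {t : ℝ} (ht : 0 ≤ t) :
    HasDerivAt γ (γ' t) t := by
  have hright : HasDerivWithinAt γ (γ' t) (Ici t) t := by
    obtain ⟨n, hn⟩ := exists_nat_mem_Ico_mul hε ht
    exact (h n t (Ico_subset_Icc_self hn)).mono_of_mem_nhdsWithin (Icc_mem_nhdsGE_of_mem hn)
  have hleft : HasDerivWithinAt γ (γ' t) (Iic t) t := by
    rcases ht.eq_or_lt with rfl | ht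
    · exact h₀
    obtain ⟨n, hn⟩ := exists_nat_mem_Ioc_mul hε ht
    exact (h n t (Ioc_subset_Icc_self hn)).mono_of_mem_nhdsWithin (Icc_mem_nhdsLE_of_mem hn)
  simpa using hleft.union hright

theorem exists_forall_hasDerivAt_of_forall_exists_step {v : E → E} {I S : Set E} {ε : ℝ}
    (hε : 0 < ε)
    (hstep : ∀ q ∈ I, ∀ a : ℝ, ∃ g : ℝ → E, g a = q ∧ g (a + ε) ∈ I ∧
      ∀ t ∈ Icc a (a + ε), g t ∈ S ∧ HasDerivWithinAt g (v (g t)) (Icc a (a + ε)) t)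
    {p₀ : E} (hp₀ : p₀ ∈ I) :
    ∃ sol : ℝ → E, sol 0 = p₀ ∧ ∀ t, 0 ≤ t → sol t ∈ S ∧ HasDerivAt sol (v (sol t)) t := by
  choose! g hg₀ hgI hg using hstep
  set Q : ℕ → E := fun n => Nat.rec p₀ (fun n q => g q (n * ε) (n * ε + ε)) n
  have hQ : ∀ n, Q n ∈ I := fun n => by
    induction n with
    | zero => exact hp₀
    | succ n ih => exact hgI _ ih _
  set piece : ℕ → ℝ → E := fun n => g (Q n) (n * ε)
  -- before time `0` the solution is continued affinely, to have a two-sided derivative at `0`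
  set sol : ℝ → E := fun t => if t < 0 then p₀ + t • v p₀ else piece ⌊t / ε⌋₊ t
  have hagree : ∀ n : ℕ, ∀ t ∈ Icc (n * ε) (n * ε + ε), sol t = piece n t := by
    intro n t ht
    have ht₀ : ¬t < 0 := not_lt.2 ((by positivity : (0 : ℝ) ≤ n * ε).trans ht.1)
    simp only [sol, if_neg ht₀]
    rcases ht.2.lt_or_eq with hlt | rfl
    · rw [(Nat.floor_eq_iff (div_nonneg (not_lt.1 ht₀) hε.le)).2
        ⟨(le_div_iff₀ hε).2 ht.1, (div_lt_iff₀ hε).2 (by linarith)⟩]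
    · have hfloor : ⌊(n * ε + ε) / ε⌋₊ = n + 1 := by
        rw [← add_one_mul, mul_div_cancel_right₀ _ hε.ne', ← Nat.cast_add_one, Nat.floor_natCast]
      rw [hfloor]
      simp only [piece, Nat.cast_add_one, add_one_mul]
      exact hg₀ _ (hQ (n + 1)) _
  have hsol : ∀ n : ℕ, ∀ t ∈ Icc (n * ε) (n * ε + ε),
      sol t ∈ S ∧ HasDerivWithinAt sol (v (sol t)) (Icc (n * ε) (n * ε + ε)) t := by
    intro n t ht
    obtain ⟨hS, hd⟩ := hg _ (hQ n) _ t ht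
    rw [hagree n t ht]
    exact ⟨hS, hd.congr (hagree n) (hagree n t ht)⟩
  have hsol₀ : sol 0 = p₀ := by
    rw [hagree 0 0 (by simp [hε.le])]
    simpa [piece, Q] using hg₀ _ hp₀ 0
  have hleft : HasDerivWithinAt sol (v (sol 0)) (Iic 0) 0 := by
    rw [hsol₀]
    refine (((hasDerivAt_id (0 : ℝ)).smul_const (v p₀)).const_add p₀).hasDerivWithinAt.congr
      (fun s hs => ?_) (by simp [hsol₀]) |>.congr_deriv (by simp)
    rcases (mem_Iic.1 hs).lt_or_eq with hs | rfl
    · simp [sol, hs]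
    · simp [hsol₀]
  refine ⟨sol, hsol₀, fun t ht => ⟨?_, ?_⟩⟩
  · obtain ⟨n, hn⟩ := exists_nat_mem_Ico_mul hε ht
    exact (hsol n t (Ico_subset_Icc_self hn)).1
  · exact hasDerivAt_of_forall_hasDerivWithinAt_Icc_nat hε (fun n t ht => (hsol n t ht).2) hleft ht

end ODE

/-- Barbalat's lemma, in the form used for gradient-like flows. -/
theorem tendsto_zero_of_hasDerivAt_neg_norm_sq {E : Type*} [SeminormedAddCommGroup E]
    {Φ : ℝ → ℝ} {w : ℝ → E}
    (hΦ : ∀ t, 0 ≤ t → HasDerivAt Φ (-‖w t‖ ^ 2) t) (hbdd : BddBelow (Φ '' Ici 0))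
    (hw : UniformContinuousOn w (Ici 0)) : Tendsto w atTop (𝓝 0) := by
  have hanti : AntitoneOn Φ (Ici 0) :=
    antitoneOn_of_hasDerivWithinAt_nonpos (convex_Ici 0)
      (fun t ht => (hΦ t ht).continuousAt.continuousWithinAt)
      (fun t ht => (hΦ t (interior_subset ht)).hasDerivWithinAt)
      fun _ _ => neg_nonpos.2 (sq_nonneg _)
  obtain ⟨l, hl⟩ : ∃ l, Tendsto Φ atTop (𝓝 l) := by
    have hmax : Antitone fun t => Φ (max t 0) := fun s t hst =>
      hanti (le_max_right s 0) (le_max_right t 0) (max_le_max hst le_rfl)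
    refine ⟨_, (tendsto_atTop_ciInf hmax (hbdd.mono ?_)).congr' ?_⟩
    · rintro _ ⟨t, rfl⟩; exact ⟨_, le_max_right t 0, rfl⟩
    · filter_upwards [eventually_ge_atTop 0] with t ht using by rw [max_eq_left ht]
  rw [Metric.tendsto_nhds]
  intro ε hε
  obtain ⟨δ, hδ, hδw⟩ := Metric.uniformContinuousOn_iff.1 hw (ε / 2) (half_pos hε)
  have hdrop : ∀ t, 0 ≤ t → ε ≤ ‖w t‖ → δ / 2 * (ε / 2) ^ 2 ≤ Φ t - Φ (t + δ / 2) := by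
    intro t ht hwt
    obtain ⟨c, hc, hslope⟩ := exists_hasDerivAt_eq_slope Φ (fun s => -‖w s‖ ^ 2)
      (by linarith : t < t + δ / 2)
      (fun s hs => (hΦ s (ht.trans hs.1)).continuousAt.continuousWithinAt)
      (fun s hs => hΦ s (ht.trans hs.1.le))
    have hwc : ε / 2 ≤ ‖w c‖ := by
      have := hδw t ht c (ht.trans hc.1.le) (by
        rw [Real.dist_eq, abs_sub_lt_iff]; constructor <;> linarith [hc.1, hc.2])
      rw [dist_eq_norm] at this
      linarith [norm_sub_norm_le (w t) (w c)]
    rw [eq_div_iff (by linarith), add_sub_cancel_left] at hslope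
    nlinarith [pow_le_pow_left₀ (half_pos hε).le hwc 2]
  have hconv : Tendsto (fun t => Φ t - Φ (t + δ / 2)) atTop (𝓝 0) := by
    simpa using hl.sub (hl.comp (tendsto_atTop_add_const_right _ _ tendsto_id))
  filter_upwards [hconv.eventually (gt_mem_nhds (by positivity : 0 < δ / 2 * (ε / 2) ^ 2)),
    eventually_ge_atTop 0] with t hdiff ht
  rw [dist_zero_right]
  by_contra! hwt
  linarith [hdrop t ht hwt]

theorem tendsto_infDist_setOf_eq_zero {ι X F : Type*} [PseudoMetricSpace X]
    [NormedAddCommGroup F] {l : Filter ι} {K U : Set X} (hK : IsCompact K) (hKU : K ⊆ U)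
    {v : X → F} (hv : ContinuousOn v K) {x : ι → X} (hx : ∀ᶠ i in l, x i ∈ K)
    (hvx : Tendsto (fun i => v (x i)) l (𝓝 0)) :
    Tendsto (fun i => infDist (x i) {q | q ∈ U ∧ v q = 0}) l (𝓝 0) := by
  set Z := {q | q ∈ U ∧ v q = 0}
  rw [Metric.tendsto_nhds]
  intro ε hε
  -- `v` is bounded away from `0` on the compact set of points of `K` that are `ε`-far from `Z`
  set A := K ∩ {q | ε ≤ infDist q Z}
  have hA : IsCompact A := hK.inter_right (isClosed_le continuous_const (continuous_infDist_pt Z))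
  have hvA : ∀ q ∈ A, 0 < ‖v q‖ := fun q hq => norm_pos_iff.2 fun h =>
    ((show ε ≤ infDist q Z from hq.2).trans_eq
      (infDist_zero_of_mem (show q ∈ Z from ⟨hKU hq.1, h⟩))).not_gt hε
  obtain ⟨η, hη, hηA⟩ := hA.exists_forall_le' (continuous_norm.comp_continuousOn
    (hv.mono inter_subset_left)) hvA
  filter_upwards [hx, Metric.tendsto_nhds.1 hvx η hη] with i hxi hvi
  rw [dist_zero_right] at hvi
  rw [Real.dist_eq, sub_zero, abs_of_nonneg infDist_nonneg]
  by_contra! h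
  exact (hηA _ ⟨hxi, h⟩).not_gt hvi

def edgePotential (φ : ℝ → ℝ) (r : ℝ) : ℝ := ∫ t in (1 : ℝ)..r, t * φ t

namespace MemU

variable {φ : ℝ → ℝ}

lemma continuousOn_mul (hφ : MemU φ) : ContinuousOn (fun t => t * φ t) (Ioi 0) :=
  continuousOn_id.mul hφ.1.continuousOn

lemma strictMonoOn_mul (hφ : MemU φ) : StrictMonoOn (fun t => t * φ t) (Ioi 0) :=
  strictMonoOn_of_deriv_pos (convex_Ioi 0) hφ.continuousOn_mul fun x hx =>
    hφ.2.1 x (by rwa [interior_Ioi] at hx)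

lemma hasDerivAt_edgePotential (hφ : MemU φ) {r : ℝ} (hr : 0 < r) :
    HasDerivAt (edgePotential φ) (r * φ r) r :=
  intervalIntegral.integral_hasDerivAt_right
    ((hφ.continuousOn_mul.mono fun _ ht => (lt_min one_pos hr).trans_le ht.1).intervalIntegrable)
    (hφ.continuousOn_mul.stronglyMeasurableAtFilter isOpen_Ioi r hr)
    (hφ.continuousOn_mul.continuousAt (Ioi_mem_nhds hr))

lemma continuousOn_edgePotential (hφ : MemU φ) : ContinuousOn (edgePotential φ) (Ioi 0) :=
  fun _ hr => (hφ.hasDerivAt_edgePotential hr).continuousAt.continuousWithinAt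

lemma exists_le_edgePotential (hφ : MemU φ) :
    ∃ m, ∀ r > 0, m ≤ edgePotential φ r := by
  obtain ⟨d, ⟨hd, hφd⟩, -⟩ := hφ.2.2.1
  have hmul : ∀ t > 0, t * φ t ≤ 0 ↔ t ≤ d := fun t ht => by
    simpa [hφd] using hφ.strictMonoOn_mul.le_iff_le (a := t) (b := d) ht hd
  have hcont : ∀ s ⊆ Ioi 0, ContinuousOn (edgePotential φ) s :=
    fun s hs => hφ.continuousOn_edgePotential.mono hs
  have hderiv : ∀ s ⊆ Ioi 0, ∀ x ∈ s, HasDerivWithinAt (edgePotential φ) (x * φ x) s x :=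
    fun s hs x hx => (hφ.hasDerivAt_edgePotential (hs hx)).hasDerivWithinAt
  have hanti : AntitoneOn (edgePotential φ) (Ioc 0 d) := by
    refine antitoneOn_of_hasDerivWithinAt_nonpos (convex_Ioc 0 d) (hcont _ Ioc_subset_Ioi_self)
      (hderiv _ (interior_subset.trans Ioc_subset_Ioi_self)) fun x hx => ?_
    rw [interior_Ioc] at hx
    exact (hmul x hx.1).2 hx.2.le
  have hmono : MonotoneOn (edgePotential φ) (Ici d) := by
    have hsub : Ici d ⊆ Ioi 0 := Ici_subset_Ioi.2 hd
    refine monotoneOn_of_hasDerivWithinAt_nonneg (convex_Ici d) (hcont _ hsub)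
      (hderiv _ (interior_subset.trans hsub)) fun x hx => ?_
    rw [interior_Ici] at hx
    exact not_lt.1 fun h => (not_le.2 hx) ((hmul x (hd.trans hx)).1 h.le)
  refine ⟨edgePotential φ d, fun r hr => ?_⟩
  rcases le_total r d with hrd | hdr
  · exact hanti ⟨hr, hrd⟩ ⟨hd, le_rfl⟩ hrd
  · exact hmono (mem_Ici.2 le_rfl) hdr hdr

lemma tendsto_edgePotential_atTop (hφ : MemU φ) : Tendsto (edgePotential φ) atTop atTop := by
  obtain ⟨d, ⟨hd, hφd⟩, -⟩ := hφ.2.2.1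
  set a := d + 1
  set c := a * φ a
  have ha : 0 < a := by positivity
  have hc : 0 < c := by
    simpa [hφd] using hφ.strictMonoOn_mul (a := d) (b := a) hd ha (by linarith)
  -- beyond `a`, the slope `t φ t` of the potential stays above `c`
  have hmono : MonotoneOn (fun r => edgePotential φ r - c * r) (Ici a) := by
    have hsub : Ici a ⊆ Ioi 0 := Ici_subset_Ioi.2 ha
    refine monotoneOn_of_hasDerivWithinAt_nonneg (convex_Ici a)
      ((hφ.continuousOn_edgePotential.mono hsub).sub (continuousOn_const.mul continuousOn_id))
      (fun x hx => (((hφ.hasDerivAt_edgePotential (hsub (interior_subset hx))).sub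
        ((hasDerivAt_id x).const_mul c)).hasDerivWithinAt)) fun x hx => ?_
    rw [interior_Ici] at hx
    simpa using (hφ.strictMonoOn_mul ha (ha.trans hx) hx).le
  refine tendsto_atTop_mono' _ ?_ (tendsto_atTop_add_const_left _ (edgePotential φ a - c * a)
    (tendsto_id.const_mul_atTop hc))
  filter_upwards [eventually_ge_atTop a] with r hr
  have := hmono (mem_Ici.2 le_rfl) hr hr
  simp only [id] at this ⊢
  linarith

lemma tendsto_edgePotential_nhdsGT_zero (hφ : MemU φ) :
    Tendsto (edgePotential φ) (𝓝[>] 0) atTop := by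
  have h : edgePotential φ = fun x => -∫ t in x..(1 : ℝ), t * φ t := by
    funext x; rw [edgePotential, intervalIntegral.integral_symm]
  rw [h]
  exact tendsto_neg_atBot_atTop.comp hφ.2.2.2

lemma eventually_le_of_edgePotential_le (hφ : MemU φ) (c : ℝ) :
    ∀ᶠ δ in 𝓝[>] 0, ∀ r > 0, edgePotential φ r ≤ c → δ ≤ r := by
  obtain ⟨u, hu, hlow⟩ := mem_nhdsGT_iff_exists_Ioo_subset.1
    (hφ.tendsto_edgePotential_nhdsGT_zero.eventually (eventually_gt_atTop c))
  filter_upwards [Ioo_mem_nhdsGT hu] with δ hδ r hr hrc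
  exact hδ.2.le.trans (not_lt.1 fun h => (not_lt.2 hrc) (hlow ⟨hr, h⟩))

lemma eventually_ge_of_edgePotential_le (hφ : MemU φ) (c : ℝ) :
    ∀ᶠ M in atTop, ∀ r > 0, edgePotential φ r ≤ c → r ≤ M := by
  obtain ⟨M₀, hhigh⟩ :=
    (hφ.tendsto_edgePotential_atTop.eventually (eventually_gt_atTop c)).exists_forall_of_atTop
  filter_upwards [eventually_ge_atTop M₀] with M hM r _ hrc
  exact (not_le.1 fun h => (not_lt.2 hrc) (hhigh r h)).le.trans hM

end MemU

def edgeVector {ι : Type} [Fintype ι] (i j : ι) : Config ι →L[ℝ] Plane :=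
  PiLp.proj (𝕜 := ℝ) 2 (fun _ => Plane) i - PiLp.proj 2 (fun _ => Plane) j

@[simp] lemma edgeVector_apply {ι : Type} [Fintype ι] (i j : ι) (q : Config ι) :
    edgeVector i j q = q i - q j := rfl

lemma MemU.hasFDerivAt_edgePotential_norm_sub {φ : ℝ → ℝ} (hφ : MemU φ) {ι : Type} [Fintype ι]
    {q : Config ι} {i j : ι} (hij : q i ≠ q j) :
    HasFDerivAt (fun x : Config ι => edgePotential φ ‖x i - x j‖)
      (φ ‖q i - q j‖ • (innerSL ℝ (q i - q j)).comp (edgeVector i j)) q := by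
  have hr : 0 < ‖q i - q j‖ := norm_pos_iff.2 (sub_ne_zero.2 hij)
  -- differentiate through the squared length, which is smooth
  have hs : 0 < ‖q i - q j‖ ^ 2 := by positivity
  have hW : HasDerivAt (edgePotential φ ∘ Real.sqrt) (φ ‖q i - q j‖ / 2) (‖q i - q j‖ ^ 2) :=
    ((hφ.hasDerivAt_edgePotential (Real.sqrt_pos.2 hs)).comp _
      (Real.hasDerivAt_sqrt hs.ne')).congr_deriv (by rw [Real.sqrt_sq hr.le]; field_simp)
  have hfun : (fun x : Config ι => edgePotential φ ‖x i - x j‖) =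
      (edgePotential φ ∘ Real.sqrt) ∘ fun x => ‖edgeVector i j x‖ ^ 2 := by
    ext x
    simp [Real.sqrt_sq (norm_nonneg _)]
  rw [hfun]
  refine (hW.comp_hasFDerivAt q ((edgeVector i j).hasFDerivAt (x := q)).norm_sq).congr_fderiv ?_
  ext h
  simp only [edgeVector_apply, map_sub, ContinuousLinearMap.sub_comp,
    smul_apply, sub_apply,
    ContinuousLinearMap.comp_apply, coe_innerSL_apply, nsmul_eq_mul, Nat.cast_ofNat, smul_eq_mul]
  ring

section FormationControl

variable {N : ℕ} {G : SimpleGraph (Fin N)} {f : Fin N → Fin N → ℝ → ℝ}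

lemma formationField_apply (q : Config (Fin N)) (i : Fin N) :
    formationField G.Adj f q i =
      ∑ j, if G.Adj i j then f i j ‖q i - q j‖ • (q j - q i) else 0 := rfl

lemma inner_formationField (hsym : ∀ i j, f i j = f j i) (q h : Config (Fin N)) :
    inner ℝ (formationField G.Adj f q) h = -∑ i, ∑ j,
      if G.Adj i j ∧ i < j then f i j ‖q i - q j‖ * inner ℝ (q i - q j) (h i - h j) else 0 := by
  set a : Fin N → Fin N → ℝ := fun i j => f i j ‖q i - q j‖ * inner ℝ (q j - q i) (h i)
  calc inner ℝ (formationField G.Adj f q) h = ∑ i, ∑ j, if G.Adj i j then a i j else 0 := by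
        rw [PiLp.inner_apply]
        refine Finset.sum_congr rfl fun i _ => ?_
        rw [formationField_apply, sum_inner]
        refine Finset.sum_congr rfl fun j _ => ?_
        split_ifs
        · exact real_inner_smul_left _ _ _
        · exact inner_zero_left _
    _ = ∑ i, ∑ j, if G.Adj i j ∧ i < j then a i j + a j i else 0 :=
        (G.sum_sum_ite_adj_lt_add_swap a).symm
    _ = _ := by
        simp only [← Finset.sum_neg_distrib]
        refine Finset.sum_congr rfl fun i _ => Finset.sum_congr rfl fun j _ => ?_
        split_ifs
        · simp only [a, hsym j i, inner_sub_right, ← neg_sub (q i) (q j),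
            inner_neg_left, norm_neg]
          ring
        · simp

lemma sum_formationField_eq_zero (hsym : ∀ i j, f i j = f j i) (q : Config (Fin N))
    {S : Finset (Fin N)} (hS : ∀ i j, G.Adj i j → (i ∈ S ↔ j ∈ S)) :
    ∑ i ∈ S, formationField G.Adj f q i = 0 := by
  set c := ∑ i ∈ S, formationField G.Adj f q i
  -- pair the field with the translation of the vertices of `S` by `c`
  set h : Config (Fin N) := WithLp.toLp 2 fun i => if i ∈ S then c else 0
  have hzero : inner ℝ (formationField G.Adj f q) h = 0 := by
    rw [inner_formationField hsym, neg_eq_zero]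
    refine Finset.sum_eq_zero fun i _ => Finset.sum_eq_zero fun j _ => ?_
    split_ifs with hij
    · simp [h, hS i j hij.1]
    · rfl
  have hc : inner ℝ (formationField G.Adj f q) h = ‖c‖ ^ 2 := by
    have hite : ∀ i, inner ℝ (formationField G.Adj f q i) (h i) =
        if i ∈ S then inner ℝ (formationField G.Adj f q i) c else 0 := fun i => by
      split_ifs with hi <;> simp [h, hi]
    rw [PiLp.inner_apply, Finset.sum_congr rfl fun i _ => hite i, Finset.sum_ite_mem,
      Finset.univ_inter, ← sum_inner, real_inner_self_eq_norm_sq]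
  rw [hzero, eq_comm, sq_eq_zero_iff, norm_eq_zero] at hc
  exact hc

lemma isOpen_configSpace : IsOpen (ConfigSpace G) := by
  simp only [ConfigSpace, ofPred_forall]
  exact isOpen_iInter_of_finite fun i => isOpen_iInter_of_finite fun j =>
    isOpen_iInter_of_finite fun _ => isOpen_ne_fun (by fun_prop) (by fun_prop)

lemma contDiffOn_formationField (hU : ∀ i j, G.Adj i j → MemU (f i j)) :
    ContDiffOn ℝ 1 (formationField G.Adj f) (ConfigSpace G) := by
  intro p hp
  refine (contDiffAt_piLp' 2 fun i => ?_).contDiffWithinAt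
  simp only [formationField_apply]
  refine ContDiffAt.sum fun j _ => ?_
  split_ifs with h
  · have hr : 0 < ‖p i - p j‖ := norm_pos_iff.2 (sub_ne_zero.2 (hp i j h))
    have hnorm : ContDiffAt ℝ 1 (fun x : Config (Fin N) => ‖edgeVector i j x‖) p :=
      (contDiffAt_norm ℝ (sub_ne_zero.2 (hp i j h))).comp p (edgeVector i j).contDiff.contDiffAt
    exact (((hU i j h).1.contDiffAt (Ioi_mem_nhds hr)).comp p hnorm).smul
      (edgeVector j i).contDiff.contDiffAt
  · exact contDiffAt_const

def componentSum (G : SimpleGraph (Fin N)) (i : Fin N) : Config (Fin N) →L[ℝ] Plane :=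
  ∑ j ∈ Finset.univ.filter (G.Reachable i), PiLp.proj (𝕜 := ℝ) 2 (fun _ => Plane) j

lemma componentSum_apply (i : Fin N) (q : Config (Fin N)) :
    componentSum G i q = ∑ j ∈ Finset.univ.filter (G.Reachable i), q j := by
  simp [componentSum]

lemma componentSum_formationField (hsym : ∀ i j, f i j = f j i) (i : Fin N)
    (q : Config (Fin N)) : componentSum G i (formationField G.Adj f q) = 0 := by
  rw [componentSum_apply]
  refine sum_formationField_eq_zero hsym q fun a b hab => ?_
  simp only [Finset.mem_filter, Finset.mem_univ, true_and]
  exact ⟨fun h => h.trans hab.reachable, fun h => h.trans hab.symm.reachable⟩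

lemma isCompact_setOf_edge_bounds (G : SimpleGraph (Fin N)) (δ M : ℝ) (c : Fin N → Plane) :
    IsCompact {q : Config (Fin N) |
      (∀ a b, G.Adj a b → δ ≤ ‖q a - q b‖ ∧ ‖q a - q b‖ ≤ M) ∧ ∀ i, componentSum G i q = c i} := by
  refine Metric.isCompact_of_isClosed_isBounded ?_ ?_
  · simp only [ofPred_and, ofPred_forall]
    refine (isClosed_iInter fun a => isClosed_iInter fun b => isClosed_iInter fun _ =>
      (isClosed_le continuous_const (edgeVector a b).continuous.norm).inter
        (isClosed_le (edgeVector a b).continuous.norm continuous_const)).inter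
      (isClosed_iInter fun i => isClosed_eq (componentSum G i).continuous continuous_const)
  · set B := N * max M 0 + ∑ i, ‖c i‖
    refine ((PiLp.antilipschitzWith_ofLp 2 _).isBounded_preimage
      (Metric.isBounded_closedBall (x := 0) (r := B))).subset fun q ⟨hedge, hsum⟩ => ?_
    have hB : 0 ≤ B := by positivity
    rw [mem_preimage, mem_closedBall_zero_iff, pi_norm_le_iff_of_nonneg hB]
    intro i
    have hreach : ∀ j ∈ Finset.univ.filter (G.Reachable i), ‖q i - q j‖ ≤ N * max M 0 := by
      intro j hj
      simpa using (Finset.mem_filter.1 hj).2.norm_sub_le_card_mul (le_max_right M 0)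
        fun a b hab => (hedge a b hab).2.trans (le_max_left M 0)
    calc ‖q i‖ ≤ N * max M 0 + ‖c i‖ := by
          rw [← hsum i, componentSum_apply]
          exact norm_le_add_norm_sum_of_norm_sub_le (by simp) hreach
      _ ≤ B := add_le_add_right
          (Finset.single_le_sum (fun j _ => norm_nonneg (c j)) (Finset.mem_univ i)) _

theorem hasGradientAt_potential (hsym : ∀ i j, f i j = f j i)
    (hU : ∀ i j, G.Adj i j → MemU (f i j)) {q : Config (Fin N)} (hq : q ∈ ConfigSpace G) :
    HasGradientAt (potential G f) (-formationField G.Adj f q) q := by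
  rw [hasGradientAt_iff_hasFDerivAt]
  have hterm : ∀ i j, HasFDerivAt
      (fun x : Config (Fin N) =>
        if G.Adj i j ∧ i < j then edgePotential (f i j) ‖x i - x j‖ else 0)
      (if G.Adj i j ∧ i < j then
        f i j ‖q i - q j‖ • (innerSL ℝ (q i - q j)).comp (edgeVector i j) else 0) q := by
    intro i j
    split_ifs with h
    · exact (hU i j h.1).hasFDerivAt_edgePotential_norm_sub (hq i j h.1)
    · exact hasFDerivAt_const 0 q
  refine HasFDerivAt.congr_fderiv (f := potential G f) (HasFDerivAt.fun_sum (u := Finset.univ)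
    fun i _ => HasFDerivAt.fun_sum (u := Finset.univ) fun j _ => hterm i j) ?_
  ext h
  simp only [InnerProductSpace.toDual_apply_apply, inner_neg_left, inner_formationField hsym,
    neg_neg, FunLike.coe_sum, Finset.sum_apply]
  refine Finset.sum_congr rfl fun i _ => Finset.sum_congr rfl fun j _ => ?_
  split_ifs <;> simp [inner_sub_left]

lemma hasDerivWithinAt_potential_comp (hsym : ∀ i j, f i j = f j i)
    (hU : ∀ i j, G.Adj i j → MemU (f i j)) {g : ℝ → Config (Fin N)} {s : Set ℝ} {t : ℝ}
    (hgt : g t ∈ ConfigSpace G) (hg : HasDerivWithinAt g (formationField G.Adj f (g t)) s t) :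
    HasDerivWithinAt (potential G f ∘ g) (-‖formationField G.Adj f (g t)‖ ^ 2) s t :=
  ((hasGradientAt_potential hsym hU hgt).hasFDerivAt.comp_hasDerivWithinAt t hg).congr_deriv
    (by simp)

def trappingRegion (G : SimpleGraph (Fin N)) (f : Fin N → Fin N → ℝ → ℝ)
    (p₀ : Config (Fin N)) : Set (Config (Fin N)) :=
  {q | q ∈ ConfigSpace G ∧ potential G f q ≤ potential G f p₀ ∧
    ∀ i, componentSum G i q = componentSum G i p₀}

lemma exists_le_edgePotential_of_adj (hU : ∀ i j, G.Adj i j → MemU (f i j)) :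
    ∃ m : Fin N → Fin N → ℝ, ∀ a b, G.Adj a b → ∀ r > 0, m a b ≤ edgePotential (f a b) r := by
  have (a b : Fin N) : ∃ m, G.Adj a b → ∀ r > 0, m ≤ edgePotential (f a b) r := by
    by_cases h : G.Adj a b
    · exact (hU a b h).exists_le_edgePotential.imp fun _ hm _ => hm
    · exact ⟨0, fun h' => absurd h' h⟩
  choose m hm using this
  exact ⟨m, hm⟩

lemma ite_le_ite_edgePotential {m : Fin N → Fin N → ℝ}
    (hm : ∀ a b, G.Adj a b → ∀ r > 0, m a b ≤ edgePotential (f a b) r)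
    {q : Config (Fin N)} (hq : q ∈ ConfigSpace G) (a b : Fin N) :
    (if G.Adj a b ∧ a < b then m a b else 0) ≤
      if G.Adj a b ∧ a < b then edgePotential (f a b) ‖q a - q b‖ else 0 := by
  split_ifs with h
  · exact hm a b h.1 _ (norm_pos_iff.2 (sub_ne_zero.2 (hq a b h.1)))
  · exact le_rfl

lemma exists_le_potential (hU : ∀ i j, G.Adj i j → MemU (f i j)) :
    ∃ m, ∀ q ∈ ConfigSpace G, m ≤ potential G f q := by
  obtain ⟨m, hm⟩ := exists_le_edgePotential_of_adj hU
  exact ⟨_, fun q hq => Finset.sum_le_sum fun a _ => Finset.sum_le_sum fun b _ =>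
    ite_le_ite_edgePotential hm hq a b⟩

lemma exists_edgePotential_le_of_potential_le (hsym : ∀ i j, f i j = f j i)
    (hU : ∀ i j, G.Adj i j → MemU (f i j)) (c : ℝ) :
    ∃ c' : Fin N → Fin N → ℝ, ∀ q ∈ ConfigSpace G, potential G f q ≤ c →
      ∀ a b, G.Adj a b → edgePotential (f a b) ‖q a - q b‖ ≤ c' a b := by
  obtain ⟨m, hm⟩ := exists_le_edgePotential_of_adj hU
  set y : Fin N → Fin N → ℝ := fun a b => if G.Adj a b ∧ a < b then m a b else 0
  -- every other edge contributes at least its lower bound to the potential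
  have hterm : ∀ q ∈ ConfigSpace G, potential G f q ≤ c → ∀ a b, G.Adj a b → a < b →
      edgePotential (f a b) ‖q a - q b‖ ≤ c - ∑ i, ∑ j, y i j + m a b := by
    intro q hq hqc a b hab hlt
    set x : Fin N → Fin N → ℝ := fun a b =>
      if G.Adj a b ∧ a < b then edgePotential (f a b) ‖q a - q b‖ else 0
    have hxy : ∀ i j, 0 ≤ x i j - y i j := fun i j =>
      sub_nonneg.2 (ite_le_ite_edgePotential hm hq i j)
    have hsingle : x a b - y a b ≤ ∑ i, ∑ j, (x i j - y i j) :=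
      (Finset.single_le_sum (fun j _ => hxy a j) (Finset.mem_univ b)).trans
        (Finset.single_le_sum (f := fun i => ∑ j, (x i j - y i j))
          (fun i _ => Finset.sum_nonneg fun j _ => hxy i j) (Finset.mem_univ a))
    simp only [Finset.sum_sub_distrib, x, y, if_pos (And.intro hab hlt)] at hsingle
    have : potential G f q = ∑ i, ∑ j, x i j := rfl
    linarith
  refine ⟨fun a b => c - ∑ i, ∑ j, y i j + max (m a b) (m b a), fun q hq hqc a b hab => ?_⟩
  rcases lt_or_gt_of_ne (G.ne_of_adj hab) with hlt | hlt
  · exact (hterm q hq hqc a b hab hlt).trans (by simp)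
  · rw [hsym, norm_sub_rev]
    exact (hterm q hq hqc b a hab.symm hlt).trans (by simp)

theorem exists_edge_bounds_of_potential_le (hsym : ∀ i j, f i j = f j i)
    (hU : ∀ i j, G.Adj i j → MemU (f i j)) (c : ℝ) :
    ∃ δ > 0, ∃ M, ∀ q ∈ ConfigSpace G, potential G f q ≤ c →
      ∀ a b, G.Adj a b → δ ≤ ‖q a - q b‖ ∧ ‖q a - q b‖ ≤ M := by
  obtain ⟨c', hc'⟩ := exists_edgePotential_le_of_potential_le hsym hU c
  have hδ : ∀ᶠ δ in 𝓝[>] 0, ∀ a b, G.Adj a b →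
      ∀ r > 0, edgePotential (f a b) r ≤ c' a b → δ ≤ r :=
    eventually_all.2 fun a => eventually_all.2 fun b => by
      by_cases h : G.Adj a b
      · exact ((hU a b h).eventually_le_of_edgePotential_le (c' a b)).mono fun _ hδ _ => hδ
      · exact Eventually.of_forall fun _ h' => absurd h' h
  have hM : ∀ᶠ M in atTop, ∀ a b, G.Adj a b →
      ∀ r > 0, edgePotential (f a b) r ≤ c' a b → r ≤ M :=
    eventually_all.2 fun a => eventually_all.2 fun b => by
      by_cases h : G.Adj a b
      · exact ((hU a b h).eventually_ge_of_edgePotential_le (c' a b)).mono fun _ hM _ => hM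
      · exact Eventually.of_forall fun _ h' => absurd h' h
  obtain ⟨δ, hδ, hδpos⟩ := (hδ.and self_mem_nhdsWithin).exists
  obtain ⟨M, hM⟩ := hM.exists
  refine ⟨δ, hδpos, M, fun q hq hqc a b hab => ?_⟩
  have hr : 0 < ‖q a - q b‖ := norm_pos_iff.2 (sub_ne_zero.2 (hq a b hab))
  exact ⟨hδ a b hab _ hr (hc' q hq hqc a b hab), hM a b hab _ hr (hc' q hq hqc a b hab)⟩

theorem exists_isCompact_superset_trappingRegion (hsym : ∀ i j, f i j = f j i)
    (hU : ∀ i j, G.Adj i j → MemU (f i j)) (p₀ : Config (Fin N)) :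
    ∃ K, IsCompact K ∧ K ⊆ ConfigSpace G ∧ trappingRegion G f p₀ ⊆ K := by
  obtain ⟨δ, hδ, M, hbd⟩ := exists_edge_bounds_of_potential_le hsym hU (potential G f p₀)
  refine ⟨_, isCompact_setOf_edge_bounds G δ M fun i => componentSum G i p₀,
    fun q hq a b hab hqab => ?_, fun q ⟨hq, hqc, hsum⟩ => ⟨hbd q hq hqc, hsum⟩⟩
  have := (hq.1 a b hab).1
  rw [hqab, sub_self, norm_zero] at this
  exact this.not_gt hδ

theorem mapsTo_trappingRegion (hsym : ∀ i j, f i j = f j i)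
    (hU : ∀ i j, G.Adj i j → MemU (f i j)) {g : ℝ → Config (Fin N)} {a b : ℝ}
    (hg : ∀ t ∈ Icc a b, g t ∈ ConfigSpace G ∧
      HasDerivWithinAt g (formationField G.Adj f (g t)) (Icc a b) t)
    {p₀ : Config (Fin N)} (ha : g a ∈ trappingRegion G f p₀) :
    ∀ t ∈ Icc a b, g t ∈ trappingRegion G f p₀ := by
  intro t ht
  have hab : a ∈ Icc a b := ⟨le_rfl, ht.1.trans ht.2⟩
  have hΦ := fun t ht => hasDerivWithinAt_potential_comp hsym hU (hg t ht).1 (hg t ht).2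
  have hanti : AntitoneOn (potential G f ∘ g) (Icc a b) :=
    antitoneOn_of_hasDerivWithinAt_nonpos (convex_Icc a b)
      (fun t ht => (hΦ t ht).continuousWithinAt)
      (fun t ht => (hΦ t (interior_subset ht)).mono interior_subset)
      (fun t _ => neg_nonpos.2 (sq_nonneg _))
  refine ⟨(hg t ht).1, (hanti hab ht ht.1).trans ha.2.1, fun i => ?_⟩
  have hsum := fun t (ht : t ∈ Icc a b) =>
    (componentSum G i).hasFDerivAt.comp_hasDerivWithinAt t (hg t ht).2
  rw [← ha.2.2 i]
  refine constant_of_has_deriv_right_zero (f := fun t => componentSum G i (g t))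
    (fun t ht => (hsum t ht).continuousWithinAt) (fun t ht => ?_) t ht
  have := (hsum t (Ico_subset_Icc_self ht)).mono_of_mem_nhdsWithin (Icc_mem_nhdsGE_of_mem ht)
  rwa [componentSum_formationField hsym] at this

theorem exists_solution_mem_isCompact (hsym : ∀ i j, f i j = f j i)
    (hU : ∀ i j, G.Adj i j → MemU (f i j)) {p₀ : Config (Fin N)} (hp₀ : p₀ ∈ ConfigSpace G) :
    ∃ K ⊆ ConfigSpace G, IsCompact K ∧ ∃ sol : ℝ → Config (Fin N), sol 0 = p₀ ∧
      ∀ t, 0 ≤ t → sol t ∈ K ∧ HasDerivAt sol (formationField G.Adj f (sol t)) t := by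
  obtain ⟨K, hK, hKU, htrap⟩ := exists_isCompact_superset_trappingRegion hsym hU p₀
  obtain ⟨K', hK'U, hK', ε, hε, hloc⟩ := exists_forall_exists_hasDerivWithinAt_Icc
    isOpen_configSpace (contDiffOn_formationField hU) hK hKU
  refine ⟨K', hK'U, hK', exists_forall_hasDerivAt_of_forall_exists_step hε
    (fun q hq a => ?_) (show p₀ ∈ trappingRegion G f p₀ from ⟨hp₀, le_rfl, fun _ => rfl⟩)⟩
  obtain ⟨g, hg₀, hg⟩ := hloc q (htrap hq) a
  refine ⟨g, hg₀, ?_, hg⟩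
  exact mapsTo_trappingRegion hsym hU (fun t ht => ⟨hK'U (hg t ht).1, (hg t ht).2⟩)
    (hg₀ ▸ hq) _ ⟨by linarith, le_rfl⟩

end FormationControl

end

set_option maxHeartbeats 1000000 in
set_option synthInstance.maxHeartbeats 400000 in
theorem stmt_6 {N : ℕ} (G : SimpleGraph (Fin N))
    (f : Fin N → Fin N → ℝ → ℝ) (hsym : ∀ i j, f i j = f j i)
    (hU : ∀ i j, G.Adj i j → MemU (f i j))
    (p0 : Config (Fin N)) (hp0 : p0 ∈ ConfigSpace G) :
    ∃ sol : ℝ → Config (Fin N), sol 0 = p0 ∧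
      (∀ t : ℝ, 0 ≤ t → HasDerivAt sol (formationField G.Adj f (sol t)) t) ∧
      (∀ t : ℝ, 0 ≤ t → sol t ∈ ConfigSpace G) ∧
      Filter.Tendsto (fun t => Metric.infDist (sol t)
          {q : Config (Fin N) | q ∈ ConfigSpace G ∧ formationField G.Adj f q = 0})
        Filter.atTop (nhds 0) := by
  set F := formationField G.Adj f
  obtain ⟨K, hKU, hK, sol, hsol₀, hsol⟩ := exists_solution_mem_isCompact hsym hU hp0
  refine ⟨sol, hsol₀, fun t ht => (hsol t ht).2, fun t ht => hKU (hsol t ht).1, ?_⟩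
  have hFK : ContinuousOn F K := (contDiffOn_formationField hU).continuousOn.mono hKU
  obtain ⟨C, hC⟩ := hK.exists_bound_of_continuousOn hFK
  have hlip : LipschitzOnWith C.toNNReal sol (Ici 0) :=
    (convex_Ici 0).lipschitzOnWith_of_nnnorm_hasDerivWithin_le
      (fun t ht => (hsol t ht).2.hasDerivWithinAt) fun t ht => by
        rw [← NNReal.coe_le_coe, coe_nnnorm]
        exact (hC _ (hsol t ht).1).trans (Real.le_coe_toNNReal C)
  obtain ⟨m, hm⟩ := exists_le_potential hU
  have hF : Tendsto (F ∘ sol) atTop (𝓝 0) :=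
    tendsto_zero_of_hasDerivAt_neg_norm_sq (Φ := potential G f ∘ sol)
      (fun t ht => hasDerivWithinAt_univ.1 <|
        hasDerivWithinAt_potential_comp hsym hU (hKU (hsol t ht).1) (hsol t ht).2.hasDerivWithinAt)
      ⟨m, by rintro _ ⟨t, ht, rfl⟩; exact hm _ (hKU (hsol t ht).1)⟩
      ((hK.uniformContinuousOn_of_continuous hFK).comp hlip.uniformContinuousOn
        fun t ht => (hsol t ht).1)
  exact tendsto_infDist_setOf_eq_zero hK hKU hFK
    ((eventually_ge_atTop 0).mono fun t ht => (hsol t ht).1) hF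

end
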